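/- Let S ⊆ S_{m+1} be a set of forbidden consecutive patterns and define χ : [0,1]^{m+1} → {0,1} by χ(x) = 1 if the coordinates of x are pairwise distinct and the standardization Π(x) ∉ S, and χ(x) = 0 otherwise. Define the operator T on L²([0,1]^m) by (Tf)(x_1,…,x_m) = ∫₀¹ χ(t,x_1,…,x_m) f(t,x_1,…,x_{m-1}) dt. Then for all n ≥ m, α_n(S)/n! = ⟨T^{n-m}(𝟙), 𝟙⟩, where 𝟙 is the constant function 1 and ⟨·,·⟩ is the L² inner product on [0,1]^m. -/

import Mathlib

open MeasureTheory

noncomputable section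

/-- The unit cube [0,1]^m. -/
def unitCube (m : ℕ) : Set (Fin m → ℝ) := Set.univ.pi fun _ => Set.Icc (0 : ℝ) 1

/-- The vector (t, x₁, …, x_{m-1}) obtained by shifting x and prepending t. -/
def shiftIn {m : ℕ} (t : ℝ) (x : Fin m → ℝ) : Fin m → ℝ :=
  fun i => if i.val = 0 then t else x ⟨i.val - 1, by have := i.isLt; omega⟩

/-- `y` realizes (is order-isomorphic to, i.e. has standardization) the pattern `σ`. -/
def Realizes {k : ℕ} (y : Fin k → ℝ) (σ : Equiv.Perm (Fin k)) : Prop :=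
  ∀ a b : Fin k, σ a < σ b ↔ y a < y b

open Classical in
/-- χ(x) = 1 if the coordinates of x are pairwise distinct and its standardization
avoids S, and 0 otherwise. -/
def chiS {m : ℕ} (S : Set (Equiv.Perm (Fin (m + 1)))) : (Fin (m + 1) → ℝ) → ℝ :=
  fun y => if Function.Injective y ∧ ∀ σ ∈ S, ¬ Realizes y σ then 1 else 0

/-- The integral operator (Tf)(x₁,…,x_m) = ∫₀¹ χ(t,x₁,…,x_m) f(t,x₁,…,x_{m-1}) dt. -/
def TOp {m : ℕ} (χ : (Fin (m + 1) → ℝ) → ℝ) (f : (Fin m → ℝ) → ℝ) :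
    (Fin m → ℝ) → ℝ :=
  fun x => ∫ t in Set.Icc (0 : ℝ) 1, χ (Fin.cons t x) * f (shiftIn t x)

/-- π ∈ S_n avoids the set S of consecutive patterns of length m+1. -/
def AvoidsSet {n m : ℕ} (π : Equiv.Perm (Fin n))
    (S : Set (Equiv.Perm (Fin (m + 1)))) : Prop :=
  ∀ (j : ℕ) (h : j + (m + 1) ≤ n), ∀ σ ∈ S,
    ¬ ∀ a b : Fin (m + 1),
        σ a < σ b ↔
          π ⟨j + a.val, by have := a.isLt; omega⟩ < π ⟨j + b.val, by have := b.isLt; omega⟩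

/-- α_n(S): the number of S-avoiding permutations in S_n. -/
def alphaCount (n m : ℕ) (S : Set (Equiv.Perm (Fin (m + 1)))) : ℕ :=
  Nat.card {π : Equiv.Perm (Fin n) // AvoidsSet π S}

/-!
Unfolding `T^k 𝟙` with Fubini writes `T^k 𝟙 (x)` as the integral over `t ∈ [0,1]^k` of the product
of `χ` over the `k` windows of length `m + 1` of the tuple `(t, x)`, so `⟨T^k 𝟙, 𝟙⟩` is the
integral of this window product over `[0,1]^(k+m)`. Up to the null set of ties, that cube is the
disjoint union of the `(k+m)!` regions on which the standardization is a fixed `π`; they are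
permuted by permuting coordinates, so each has volume `1/(k+m)!`, and on the region of `π` the
window product is `1` if `π` avoids `S` and `0` otherwise.
-/

open scoped Nat

namespace Realizes

variable {n : ℕ} {y : Fin n → ℝ} {π : Equiv.Perm (Fin n)}

theorem injective (h : Realizes y π) : Function.Injective y := by
  intro a b hab
  by_contra hne
  rcases lt_or_gt_of_ne (π.injective.ne hne) with hlt | hlt
  · exact (h a b).1 hlt |>.ne hab
  · exact (h b a).1 hlt |>.ne hab.symm

theorem strictMono_comp_symm (h : Realizes y π) : StrictMono (y ∘ π.symm) :=
  fun a b hab => (h _ _).1 (by simpa using hab)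

theorem unique {π' : Equiv.Perm (Fin n)} (h : Realizes y π) (h' : Realizes y π') : π = π' := by
  have := Tuple.unique_monotone h.strictMono_comp_symm.monotone h'.strictMono_comp_symm.monotone
  exact inv_injective (Equiv.ext fun a => h.injective (congrFun this a))

theorem comp_iff (h : Realizes y π) {l : ℕ} (f : Fin l → Fin n) (σ : Equiv.Perm (Fin l)) :
    Realizes (y ∘ f) σ ↔ ∀ a b, σ a < σ b ↔ π (f a) < π (f b) := by
  simp only [Realizes, Function.comp_apply, ← h _ _]

end Realizes

theorem exists_realizes_of_injective {n : ℕ} {y : Fin n → ℝ} (hy : Function.Injective y) :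
    ∃ π : Equiv.Perm (Fin n), Realizes y π := by
  have hsort : StrictMono (y ∘ Tuple.sort y) :=
    (Tuple.monotone_sort y).strictMono_of_injective (hy.comp (Tuple.sort y).injective)
  refine ⟨(Tuple.sort y)⁻¹, fun a b => ?_⟩
  simpa using hsort.lt_iff_lt (a := (Tuple.sort y)⁻¹ a) (b := (Tuple.sort y)⁻¹ b) |>.symm

theorem realizes_comp_symm_iff {n : ℕ} {y : Fin n → ℝ} (σ τ : Equiv.Perm (Fin n)) :
    Realizes (y ∘ τ.symm) σ ↔ Realizes y (σ * τ) := by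
  simp only [Realizes]
  constructor
  · intro h c d; simpa using h (τ c) (τ d)
  · intro h a b; simpa using h (τ.symm a) (τ.symm b)

theorem measurableSet_setOf_realizes {n : ℕ} (σ : Equiv.Perm (Fin n)) :
    MeasurableSet {y : Fin n → ℝ | Realizes y σ} :=
  measurableSet_setOfPred.2 <| by unfold Realizes; fun_prop

theorem measurable_chiS {m : ℕ} (S : Set (Equiv.Perm (Fin (m + 1)))) : Measurable (chiS S) := by
  refine Measurable.ite (measurableSet_setOfPred.2 ?_) measurable_const measurable_const
  unfold Function.Injective Realizes
  fun_prop

section IidCoordinates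

variable {μ : Measure ℝ}

theorem pi_setOf_apply_eq_apply_null [SigmaFinite μ] [NullSingletonClass μ] {n : ℕ}
    {a b : Fin n} (hab : a ≠ b) : Measure.pi (fun _ : Fin n => μ) {y | y a = y b} = 0 := by
  cases n with
  | zero => exact a.elim0
  | succ n =>
  obtain ⟨j, rfl⟩ := Fin.exists_succAbove_eq hab
  have hmeas : MeasurableSet {p : ℝ × (Fin n → ℝ) | p.2 j = p.1} :=
    measurableSet_eq_fun (by fun_prop) measurable_fst
  have hpre : MeasurableEquiv.piFinSuccAbove (fun _ => ℝ) b ⁻¹' {p | p.2 j = p.1} =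
      {y | y (b.succAbove j) = y b} := rfl
  rw [← hpre, (measurePreserving_piFinSuccAbove (fun _ => μ) b).measure_preimage
    hmeas.nullMeasurableSet, Measure.prod_apply hmeas]
  simp [Measure.pi_hyperplane]

theorem ae_injective_pi [SigmaFinite μ] [NullSingletonClass μ] {n : ℕ} :
    ∀ᵐ y ∂Measure.pi (fun _ : Fin n => μ), Function.Injective y := by
  simp only [Function.Injective, ae_all_iff]
  intro a b
  by_cases hab : a = b
  · exact ae_of_all _ fun _ _ => hab
  filter_upwards [measure_eq_zero_iff_ae_notMem.1 (pi_setOf_apply_eq_apply_null (μ := μ) hab)]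
    with y hy h using absurd h hy

theorem integral_eq_sum_setIntegral_realizes [SigmaFinite μ] [NullSingletonClass μ] {n : ℕ}
    {f : (Fin n → ℝ) → ℝ} (hf : Integrable f (Measure.pi fun _ => μ)) :
    ∫ y, f y ∂Measure.pi (fun _ => μ) =
      ∑ π : Equiv.Perm (Fin n), ∫ y in {y | Realizes y π}, f y ∂Measure.pi (fun _ => μ) := by
  have hcover : ⋃ π : Equiv.Perm (Fin n), {y | Realizes y π} = {y | Function.Injective y} := by
    ext y
    simp only [Set.mem_iUnion, Set.mem_ofPred_eq]
    exact ⟨fun ⟨_, h⟩ => h.injective, exists_realizes_of_injective⟩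
  have hdisj :
      Pairwise (Function.onFun Disjoint fun π : Equiv.Perm (Fin n) => {y | Realizes y π}) :=
    fun π π' hne => Set.disjoint_left.2 fun _ h h' => hne (Realizes.unique h h')
  rw [← integral_iUnion_fintype measurableSet_setOf_realizes hdisj fun _ => hf.integrableOn,
    hcover, Measure.restrict_eq_self_of_ae_mem (s := {y | Function.Injective y}) ae_injective_pi]

theorem measure_setOf_realizes_mul [SigmaFinite μ] {n : ℕ} (σ τ : Equiv.Perm (Fin n)) :
    Measure.pi (fun _ => μ) {y | Realizes y (σ * τ)} =
      Measure.pi (fun _ => μ) {y | Realizes y σ} := by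
  have hpre : MeasurableEquiv.piCongrLeft (fun _ => ℝ) τ ⁻¹' {y | Realizes y σ} =
      {y | Realizes y (σ * τ)} := by
    ext y
    have hcoord : MeasurableEquiv.piCongrLeft (fun _ => ℝ) τ y = y ∘ τ.symm := by
      ext i
      simpa using MeasurableEquiv.piCongrLeft_apply_apply (β := fun _ => ℝ) τ y (τ.symm i)
    simp [hcoord, realizes_comp_symm_iff]
  rw [← hpre]
  exact (measurePreserving_piCongrLeft (fun _ => μ) τ).measure_preimage
    (measurableSet_setOf_realizes σ).nullMeasurableSet

theorem measureReal_setOf_realizes [IsProbabilityMeasure μ] [NullSingletonClass μ] {n : ℕ}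
    (π : Equiv.Perm (Fin n)) :
    (Measure.pi fun _ => μ).real {y | Realizes y π} = (n ! : ℝ)⁻¹ := by
  have hsum := integral_eq_sum_setIntegral_realizes (μ := μ) (n := n) (integrable_const (1 : ℝ))
  have hinv : ∀ σ : Equiv.Perm (Fin n), (Measure.pi fun _ => μ).real {y | Realizes y σ} =
      (Measure.pi fun _ => μ).real {y | Realizes y π} := fun σ => by
    simpa [measureReal_def] using congrArg ENNReal.toReal (measure_setOf_realizes_mul π (π⁻¹ * σ))
  simp only [integral_const, probReal_univ, smul_eq_mul, mul_one, MeasurableSet.univ,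
    measureReal_restrict_apply, Set.univ_inter, hinv, Finset.sum_const, Finset.card_univ,
    Fintype.card_perm, Fintype.card_fin, nsmul_eq_mul] at hsum
  exact eq_inv_of_mul_eq_one_right hsum.symm

end IidCoordinates

@[fun_prop]
theorem Measurable.finAppend {α β : Type*} [MeasurableSpace α] [MeasurableSpace β] {k m : ℕ}
    {f : β → Fin k → α} {g : β → Fin m → α} (hf : Measurable f) (hg : Measurable g) :
    Measurable fun b => Fin.append (f b) (g b) := by
  refine measurable_pi_lambda _ fun i => ?_
  induction i using Fin.addCases <;> simp only [Fin.append_left, Fin.append_right] <;> fun_prop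

theorem measurePreserving_append {α : Type*} [MeasurableSpace α] (μ : Measure α) [SigmaFinite μ]
    (k m : ℕ) :
    MeasurePreserving (fun p : (Fin k → α) × (Fin m → α) => Fin.append p.1 p.2)
      ((Measure.pi fun _ => μ).prod (Measure.pi fun _ => μ)) (Measure.pi fun _ => μ) := by
  have hmeas : Measurable fun p : (Fin k → α) × (Fin m → α) => Fin.append p.1 p.2 := by fun_prop
  refine ⟨hmeas, (Measure.pi_eq fun s hs => ?_).symm⟩
  have hpre : (fun p : (Fin k → α) × (Fin m → α) => Fin.append p.1 p.2) ⁻¹' Set.univ.pi s =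
      Set.univ.pi (fun i => s (Fin.castAdd m i)) ×ˢ Set.univ.pi (fun i => s (Fin.natAdd k i)) := by
    ext p
    simp [Fin.forall_fin_add]
  rw [Measure.map_apply hmeas (.univ_pi hs), hpre, Measure.prod_prod, Measure.pi_pi,
    Measure.pi_pi, Fin.prod_univ_add]

theorem integral_integral_append {α E : Type*} [MeasurableSpace α] [NormedAddCommGroup E]
    [NormedSpace ℝ E] (μ : Measure α) [SigmaFinite μ] {k m : ℕ} {F : (Fin (k + m) → α) → E}
    (hF : Integrable F (Measure.pi fun _ => μ)) :
    ∫ x, ∫ t, F (Fin.append t x) ∂Measure.pi (fun _ => μ) ∂Measure.pi (fun _ => μ) =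
      ∫ y, F y ∂Measure.pi (fun _ => μ) := by
  have happ := measurePreserving_append μ k m
  calc _ = ∫ p, F (Fin.append p.1 p.2) ∂(Measure.pi fun _ => μ).prod (Measure.pi fun _ => μ) :=
        (integral_prod_symm _ (happ.integrable_comp hF.aestronglyMeasurable |>.2 hF)).symm
    _ = _ := by
      rw [← integral_map happ.measurable.aemeasurable (happ.map_eq ▸ hF.aestronglyMeasurable),
        happ.map_eq]

theorem append_apply_mk {α : Type*} {k m : ℕ} (a : Fin k → α) (b : Fin m → α) (i : ℕ)
    (h : i < k + m) :
    Fin.append a b ⟨i, h⟩ = if h' : i < k then a ⟨i, h'⟩ else b ⟨i - k, by omega⟩ := by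
  simp [Fin.append, Fin.addCases]

def window (m : ℕ) {k : ℕ} (y : Fin (k + m) → ℝ) (j : Fin k) : Fin (m + 1) → ℝ :=
  y ∘ fun i => ⟨j + i, by omega⟩

def avoidIndicator {m k : ℕ} (S : Set (Equiv.Perm (Fin (m + 1)))) (y : Fin (k + m) → ℝ) :
    ℝ :=
  ∏ j : Fin k, chiS S (window m y j)

theorem abs_chiS_le_one {m : ℕ} (S : Set (Equiv.Perm (Fin (m + 1)))) (y : Fin (m + 1) → ℝ) :
    |chiS S y| ≤ 1 := by
  unfold chiS; split_ifs <;> simp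

variable {m k : ℕ} (S : Set (Equiv.Perm (Fin (m + 1))))

theorem norm_avoidIndicator_le_one (y : Fin (k + m) → ℝ) : ‖avoidIndicator S y‖ ≤ 1 := by
  rw [avoidIndicator, norm_prod]
  exact Finset.prod_le_one (fun _ _ => norm_nonneg _) fun _ _ => abs_chiS_le_one S _

theorem measurable_avoidIndicator : Measurable (avoidIndicator (k := k) S) :=
  Finset.measurable_prod _ fun _ _ => (measurable_chiS S).comp (by unfold window; fun_prop)

theorem integrable_avoidIndicator (ν : Measure (Fin (k + m) → ℝ)) [IsFiniteMeasure ν] :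
    Integrable (avoidIndicator S) ν :=
  .of_bound (measurable_avoidIndicator S).aestronglyMeasurable 1
    (ae_of_all _ (norm_avoidIndicator_le_one S))

theorem chiS_mul_avoidIndicator_append (t : ℝ) (x : Fin m → ℝ) (s : Fin k → ℝ) :
    chiS S (Fin.cons t x) * avoidIndicator S (Fin.append s (shiftIn t x)) =
      avoidIndicator S (Fin.append (Fin.append s fun _ : Fin 1 => t) x) := by
  rw [avoidIndicator, avoidIndicator, Fin.prod_univ_castSucc, mul_comm]
  congr 2
  · ext j : 2
    congr 1
    ext i
    simp only [window, Function.comp_apply, append_apply_mk, shiftIn, Fin.val_castSucc]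
    split_ifs <;> first | rfl | omega
  · ext i
    induction i using Fin.cases <;> simp [window, append_apply_mk, Nat.add_sub_add_left]

open Classical in
theorem avoidIndicator_of_realizes {y : Fin (k + m) → ℝ} {π : Equiv.Perm (Fin (k + m))}
    (hy : Realizes y π) :
    avoidIndicator S y = if AvoidsSet π S then 1 else 0 := by
  have hwindow (j : Fin k) : chiS S (window m y j) = if ∀ σ ∈ S, ¬ ∀ a b : Fin (m + 1),
      σ a < σ b ↔ π ⟨j + a, by omega⟩ < π ⟨j + b, by omega⟩ then 1 else 0 := by
    have hinj : Function.Injective (window m y j) :=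
      hy.injective.comp fun a b hab => Fin.ext (by simpa using congrArg Fin.val hab)
    simp only [chiS, hinj, true_and]
    simp only [window, hy.comp_iff]
  rw [avoidIndicator, Finset.prod_congr rfl fun j _ => hwindow j, Finset.prod_boole]
  congr 1
  exact propext ⟨fun h j hj => h ⟨j, by omega⟩ (Finset.mem_univ _), fun h j _ => h j (by omega)⟩

theorem integral_avoidIndicator {μ : Measure ℝ} [IsProbabilityMeasure μ] [NullSingletonClass μ] :
    ∫ y, avoidIndicator (k := k) S y ∂Measure.pi (fun _ => μ) =
      alphaCount (k + m) m S / (k + m)! := by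
  classical
  have hpiece (π : Equiv.Perm (Fin (k + m))) :
      ∫ y in {y | Realizes y π}, avoidIndicator S y ∂Measure.pi (fun _ => μ) =
        (if AvoidsSet π S then 1 else 0) * ((k + m)! : ℝ)⁻¹ := by
    rw [setIntegral_congr_fun (measurableSet_setOf_realizes π)
        fun y hy => avoidIndicator_of_realizes S hy,
      setIntegral_const, measureReal_setOf_realizes, smul_eq_mul, mul_comm]
  rw [integral_eq_sum_setIntegral_realizes (integrable_avoidIndicator S _)]
  simp only [hpiece, ← Finset.sum_mul, Finset.sum_boole, div_eq_mul_inv]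
  rw [alphaCount, Nat.card_eq_fintype_card, Fintype.card_subtype]

instance isProbabilityMeasure_restrict_Icc_zero_one :
    IsProbabilityMeasure (volume.restrict (Set.Icc (0 : ℝ) 1)) :=
  ⟨by simp⟩

theorem iterate_TOp_chiS_apply (x : Fin m → ℝ) :
    (TOp (chiS S))^[k] (fun _ => 1) x =
      ∫ t : Fin k → ℝ, avoidIndicator S (Fin.append t x)
        ∂Measure.pi fun _ => volume.restrict (Set.Icc 0 1) := by
  induction k generalizing x with
  | zero => simp [avoidIndicator]
  | succ k ih =>
    have hint : Integrable (fun u : Fin (k + 1) → ℝ => avoidIndicator S (Fin.append u x))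
        (Measure.pi fun _ => volume.restrict (Set.Icc 0 1)) :=
      (integrable_avoidIndicator S _).comp_measurable (by fun_prop)
    rw [Function.iterate_succ_apply', TOp, ← integral_integral_append _ hint]
    refine .trans ?_ ((measurePreserving_funUnique _ (Fin 1)).symm.integral_comp' _)
    refine integral_congr_ae (ae_of_all _ fun t => ?_)
    simp only [ih, ← integral_const_mul, chiS_mul_avoidIndicator_append,
      MeasurableEquiv.funUnique_symm_apply]
    rfl

theorem alpha_div_factorial_eq_inner (m : ℕ)
    (S : Set (Equiv.Perm (Fin (m + 1)))) (n : ℕ) (hn : m ≤ n) :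
    (alphaCount n m S : ℝ) / (n.factorial : ℝ) =
      ∫ x in unitCube m, (TOp (chiS S))^[n - m] (fun _ => 1) x := by
  obtain ⟨k, rfl⟩ : ∃ k, n = k + m := ⟨n - m, by omega⟩
  rw [Nat.add_sub_cancel, unitCube, volume_pi, Measure.restrict_pi_pi]
  simp only [iterate_TOp_chiS_apply]
  rw [integral_integral_append _ (integrable_avoidIndicator S _),
    integral_avoidIndicator]

end
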